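/- Second passage from the (A′)(B′) condition to the (A)(B) condition. Let X₁, Y₁, X₂, Y₂ be metric spaces and suppose the correspondence H ∼ (F,G) satisfies the (A′)(α̃,λ̃_u) and (B′)(β̃,λ̃_s) conditions, where α̃, β̃ ≥ 0, λ̃_s, λ̃_u > 0 and λ̃_s·λ̃_u < 1. Let ρ₁, ρ₂ be real numbers with λ̃_s·λ̃_u < ρ₂ < (λ̃_s·λ̃_u)^{1/2} and 1 − ρ₂⁻¹·λ̃_s·λ̃_u < ρ₁ < 1 − ρ₂, and set ρ = ρ₁ + ρ₂ (so ρ < 1). If α̃·β̃ ≤ ρ₁·(1 − ρ₂⁻¹·λ̃_s·λ̃_u), then, with α = ρ₁⁻¹·α̃, β = ρ₁⁻¹·β̃, λ_s = λ̃_s/(1 − α·β̃), λ_u = λ̃_u/(1 − β·α̃), the correspondence H satisfies the (A)(α; ρα, λ_u)(B)(β; ρβ, λ_s) condition; furthermore α·β < 1 and λ_s·λ_u < 1. -/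

import Mathlib

/-!
Both maps are Lipschitz in each variable separately, so by the triangle inequality through
`(x₁, y₂')` the distances of `F`- and `G`-values are bounded by `α̃ dy + λ̃_s dx` and
`λ̃_u dy + β̃ dx`. Inside the cone `dx ≤ α dG` the second bound can be solved for `dx`, giving
`(1 - αβ̃) dx ≤ α λ̃_u dy`; substituting into the first bound yields the (A) estimates, because
`α̃ = ρ₁ α` and the hypothesis on `α̃ β̃` reads `λ̃_s λ̃_u ≤ ρ₂ (1 - αβ̃)`. The (B) estimates are
the (A) estimates of the correspondence with the roles of the two variables exchanged. Finally
`λ_s λ_u = λ̃_s λ̃_u / (1 - αβ̃)² ≤ ρ₂² / (λ̃_s λ̃_u) < 1` since `ρ₂ < (λ̃_s λ̃_u)^{1/2}`.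
-/

theorem dist_le_add_of_lipschitz_separately {X Y Z : Type*}
    [PseudoMetricSpace X] [PseudoMetricSpace Y] [PseudoMetricSpace Z]
    (F : X → Y → Z) {a b : ℝ}
    (hy : ∀ (x : X) (y y' : Y), dist (F x y) (F x y') ≤ a * dist y y')
    (hx : ∀ (y : Y) (x x' : X), dist (F x y) (F x' y) ≤ b * dist x x')
    (x x' : X) (y y' : Y) :
    dist (F x y) (F x' y') ≤ a * dist y y' + b * dist x x' :=
  (dist_triangle _ (F x y') _).trans (add_le_add (hy x y y') (hx y' x x'))

section Cones

variable {X₁ Y₁ X₂ Y₂ : Type*}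
    [PseudoMetricSpace X₁] [PseudoMetricSpace Y₁] [PseudoMetricSpace X₂] [PseudoMetricSpace Y₂]
    (F : X₁ → Y₂ → X₂) (G : X₁ → Y₂ → Y₁) {αt βt lst lut α β ρ₁ ρ₂ : ℝ}

theorem condition_A_of_condition_A'_B' (hα : 0 ≤ α) (hβt : 0 ≤ βt) (hlst : 0 ≤ lst)
    (hA'F : ∀ (x : X₁) (y y' : Y₂), dist (F x y) (F x y') ≤ αt * dist y y')
    (hA'G : ∀ (x : X₁) (y y' : Y₂), dist (G x y) (G x y') ≤ lut * dist y y')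
    (hB'G : ∀ (y : Y₂) (x x' : X₁), dist (G x y) (G x' y) ≤ βt * dist x x')
    (hB'F : ∀ (y : Y₂) (x x' : X₁), dist (F x y) (F x' y) ≤ lst * dist x x')
    (hαt : αt ≤ ρ₁ * α) (hgap : 0 < 1 - α * βt) (hlam : lst * lut ≤ ρ₂ * (1 - α * βt))
    (x₁ x₁' : X₁) (y₂ y₂' : Y₂) (hcone : dist x₁ x₁' ≤ α * dist (G x₁ y₂) (G x₁' y₂')) :
    dist (F x₁ y₂) (F x₁' y₂') ≤ (ρ₁ + ρ₂) * α * dist y₂ y₂' ∧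
      dist (G x₁ y₂) (G x₁' y₂') ≤ lut / (1 - α * βt) * dist y₂ y₂' := by
  set dx := dist x₁ x₁'
  set dy := dist y₂ y₂'
  have hF := dist_le_add_of_lipschitz_separately F hA'F hB'F x₁ x₁' y₂ y₂'
  have hG := dist_le_add_of_lipschitz_separately G hA'G hB'G x₁ x₁' y₂ y₂'
  have hdx : (1 - α * βt) * dx ≤ α * lut * dy := by
    nlinarith [mul_le_mul_of_nonneg_left hG hα]
  have hdy : 0 ≤ dy := dist_nonneg
  constructor
  · have hlst_dx : lst * dx ≤ ρ₂ * α * dy := by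
      refine le_of_mul_le_mul_left ?_ hgap
      nlinarith [mul_le_mul_of_nonneg_left hdx hlst,
        mul_le_mul_of_nonneg_right hlam (mul_nonneg hα hdy)]
    nlinarith [mul_le_mul_of_nonneg_right hαt hdy]
  · rw [div_mul_eq_mul_div, le_div_iff₀ hgap]
    nlinarith [mul_le_mul_of_nonneg_left hdx hβt]

theorem condition_B_of_condition_A'_B' (hβ : 0 ≤ β) (hαt : 0 ≤ αt) (hlut : 0 ≤ lut)
    (hA'F : ∀ (x : X₁) (y y' : Y₂), dist (F x y) (F x y') ≤ αt * dist y y')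
    (hA'G : ∀ (x : X₁) (y y' : Y₂), dist (G x y) (G x y') ≤ lut * dist y y')
    (hB'G : ∀ (y : Y₂) (x x' : X₁), dist (G x y) (G x' y) ≤ βt * dist x x')
    (hB'F : ∀ (y : Y₂) (x x' : X₁), dist (F x y) (F x' y) ≤ lst * dist x x')
    (hβt : βt ≤ ρ₁ * β) (hgap : 0 < 1 - β * αt) (hlam : lst * lut ≤ ρ₂ * (1 - β * αt))
    (x₁ x₁' : X₁) (y₂ y₂' : Y₂) (hcone : dist y₂ y₂' ≤ β * dist (F x₁ y₂) (F x₁' y₂')) :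
    dist (G x₁ y₂) (G x₁' y₂') ≤ (ρ₁ + ρ₂) * β * dist x₁ x₁' ∧
      dist (F x₁ y₂) (F x₁' y₂') ≤ lst / (1 - β * αt) * dist x₁ x₁' :=
  condition_A_of_condition_A'_B' (fun y x ↦ G x y) (fun y x ↦ F x y) hβ hαt hlut
    (fun y x x' ↦ hB'G y x x') (fun y x x' ↦ hB'F y x x') (fun x y y' ↦ hA'F x y y')
    (fun x y y' ↦ hA'G x y y') hβt hgap (by linarith) y₂ y₂' x₁ x₁' hcone

end Cones

theorem div_mul_div_self_lt_one {a b r d : ℝ} (hr : 0 < r) (hrab : r ^ 2 < a * b)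
    (habd : a * b ≤ r * d) : a / d * (b / d) < 1 := by
  have hab : 0 < a * b := (pow_pos hr 2).trans hrab
  have hd : 0 < d := pos_of_mul_pos_right (hab.trans_le habd) hr.le
  rw [div_mul_div_comm, div_lt_one (mul_pos hd hd)]
  nlinarith [mul_le_mul habd habd hab.le (hab.le.trans habd)]

theorem second_passage_A'B'_to_AB_general
    {X₁ Y₁ X₂ Y₂ : Type*}
    [MetricSpace X₁] [MetricSpace Y₁] [MetricSpace X₂] [MetricSpace Y₂]
    (F : X₁ → Y₂ → X₂) (G : X₁ → Y₂ → Y₁)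
    (αt βt lst lut ρ₁ ρ₂ : ℝ)
    (hαt : 0 ≤ αt) (hβt : 0 ≤ βt) (hlst : 0 < lst) (hlut : 0 < lut)
    -- (A′)(α̃, λ̃_u) condition
    (hA'F : ∀ (x : X₁) (y y' : Y₂), dist (F x y) (F x y') ≤ αt * dist y y')
    (hA'G : ∀ (x : X₁) (y y' : Y₂), dist (G x y) (G x y') ≤ lut * dist y y')
    -- (B′)(β̃, λ̃_s) condition
    (hB'G : ∀ (y : Y₂) (x x' : X₁), dist (G x y) (G x' y) ≤ βt * dist x x')
    (hB'F : ∀ (y : Y₂) (x x' : X₁), dist (F x y) (F x' y) ≤ lst * dist x x')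
    (hρ₂l : lst * lut < ρ₂) (hρ₂u : ρ₂ < Real.sqrt (lst * lut))
    (hρ₁l : 1 - (lst * lut) / ρ₂ < ρ₁) (hρ₁u : ρ₁ < 1 - ρ₂)
    (hαβ : αt * βt ≤ ρ₁ * (1 - (lst * lut) / ρ₂)) :
    ∀ ρ α β lams lamu : ℝ,
      ρ = ρ₁ + ρ₂ →
      α = αt / ρ₁ → β = βt / ρ₁ →
      lams = lst / (1 - α * βt) → lamu = lut / (1 - β * αt) →
      ρ < 1 ∧
      -- H satisfies the (A)(α; ρα, λ_u)(B)(β; ρβ, λ_s) condition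
      (∀ (x₁ x₁' : X₁) (y₂ y₂' : Y₂),
        dist x₁ x₁' ≤ α * dist (G x₁ y₂) (G x₁' y₂') →
          dist (F x₁ y₂) (F x₁' y₂') ≤ ρ * α * dist y₂ y₂' ∧
            dist (G x₁ y₂) (G x₁' y₂') ≤ lamu * dist y₂ y₂') ∧
      (∀ (x₁ x₁' : X₁) (y₂ y₂' : Y₂),
        dist y₂ y₂' ≤ β * dist (F x₁ y₂) (F x₁' y₂') →
          dist (G x₁ y₂) (G x₁' y₂') ≤ ρ * β * dist x₁ x₁' ∧
            dist (F x₁ y₂) (F x₁' y₂') ≤ lams * dist x₁ x₁') ∧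
      α * β < 1 ∧ lams * lamu < 1 := by
  rintro ρ α β lams lamu rfl rfl rfl rfl rfl
  have hll : 0 < lst * lut := mul_pos hlst hlut
  have hρ₂ : 0 < ρ₂ := hll.trans hρ₂l
  have hρ₂_sq : ρ₂ ^ 2 < lst * lut := by
    simpa using (Real.lt_sqrt hρ₂.le).1 hρ₂u
  have hll_div : lst * lut / ρ₂ < 1 := (div_lt_one hρ₂).2 hρ₂l
  have hρ₁ : 0 < ρ₁ := by linarith
  have hswap : βt / ρ₁ * αt = αt / ρ₁ * βt := by ring
  have hαβt : αt / ρ₁ * βt ≤ 1 - lst * lut / ρ₂ := by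
    rwa [div_mul_eq_mul_div, div_le_iff₀' hρ₁]
  have hlam : lst * lut ≤ ρ₂ * (1 - αt / ρ₁ * βt) := by
    rw [← div_le_iff₀' hρ₂]; linarith
  have hgap : 0 < 1 - αt / ρ₁ * βt := by linarith
  have hρ₁_div : ∀ a : ℝ, a ≤ ρ₁ * (a / ρ₁) := fun a ↦ (mul_div_cancel₀ a hρ₁.ne').ge
  rw [hswap]
  refine ⟨by linarith,
    condition_A_of_condition_A'_B' F G (by positivity) hβt hlst.le hA'F hA'G hB'G hB'F
      (hρ₁_div αt) hgap hlam, ?_, ?_, ?_⟩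
  · rw [← hswap] at hgap hlam ⊢
    exact condition_B_of_condition_A'_B' F G (by positivity) hαt hlut.le hA'F hA'G hB'G hB'F
      (hρ₁_div βt) hgap hlam
  · calc αt / ρ₁ * (βt / ρ₁) = αt / ρ₁ * βt / ρ₁ := by ring
      _ < 1 := by rw [div_lt_one hρ₁]; linarith
  · exact div_mul_div_self_lt_one hρ₂ hρ₂_sq hlam

/-- Second passage from the (A′)(B′) condition to the (A)(B) condition. -/
theorem second_passage_A'B'_to_AB
    {X₁ Y₁ X₂ Y₂ : Type*}
    [MetricSpace X₁] [MetricSpace Y₁] [MetricSpace X₂] [MetricSpace Y₂]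
    (F : X₁ → Y₂ → X₂) (G : X₁ → Y₂ → Y₁)
    (αt βt lst lut ρ₁ ρ₂ : ℝ)
    (hαt : 0 ≤ αt) (hβt : 0 ≤ βt) (hlst : 0 < lst) (hlut : 0 < lut)
    -- (A′)(α̃, λ̃_u) condition
    (hA'F : ∀ (x : X₁) (y y' : Y₂), dist (F x y) (F x y') ≤ αt * dist y y')
    (hA'G : ∀ (x : X₁) (y y' : Y₂), dist (G x y) (G x y') ≤ lut * dist y y')
    -- (B′)(β̃, λ̃_s) condition
    (hB'G : ∀ (y : Y₂) (x x' : X₁), dist (G x y) (G x' y) ≤ βt * dist x x')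
    (hB'F : ∀ (y : Y₂) (x x' : X₁), dist (F x y) (F x' y) ≤ lst * dist x x')
    (hll : lst * lut < 1)
    (hρ₂l : lst * lut < ρ₂) (hρ₂u : ρ₂ < Real.sqrt (lst * lut))
    (hρ₁l : 1 - (lst * lut) / ρ₂ < ρ₁) (hρ₁u : ρ₁ < 1 - ρ₂)
    (hαβ : αt * βt ≤ ρ₁ * (1 - (lst * lut) / ρ₂)) :
    ∀ ρ α β lams lamu : ℝ,
      ρ = ρ₁ + ρ₂ →
      α = αt / ρ₁ → β = βt / ρ₁ →
      lams = lst / (1 - α * βt) → lamu = lut / (1 - β * αt) →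
      ρ < 1 ∧
      -- H satisfies the (A)(α; ρα, λ_u)(B)(β; ρβ, λ_s) condition
      (∀ (x₁ x₁' : X₁) (y₂ y₂' : Y₂),
        dist x₁ x₁' ≤ α * dist (G x₁ y₂) (G x₁' y₂') →
          dist (F x₁ y₂) (F x₁' y₂') ≤ ρ * α * dist y₂ y₂' ∧
            dist (G x₁ y₂) (G x₁' y₂') ≤ lamu * dist y₂ y₂') ∧
      (∀ (x₁ x₁' : X₁) (y₂ y₂' : Y₂),
        dist y₂ y₂' ≤ β * dist (F x₁ y₂) (F x₁' y₂') →
          dist (G x₁ y₂) (G x₁' y₂') ≤ ρ * β * dist x₁ x₁' ∧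
            dist (F x₁ y₂) (F x₁' y₂') ≤ lams * dist x₁ x₁') ∧
      α * β < 1 ∧ lams * lamu < 1 :=
  second_passage_A'B'_to_AB_general F G αt βt lst lut ρ₁ ρ₂ hαt hβt hlst hlut hA'F hA'G hB'G hB'F
    hρ₂l hρ₂u hρ₁l hρ₁u hαβ
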